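/- The Dyck grammar is strongly equivalent to the accepting traces of the counter automaton: define Dyck : List Paren → Set inductively by nil : Dyck [] and bal : Dyck w₁ → Dyck w₂ → Dyck ('(' :: w₁ ++ ')' :: w₂); define the automaton state space ℕ ∪ {fail} with the counting transition function, and Trace n true w its accepting traces starting with counter n. Then there is a bijection Dyck w ≃ Trace 0 true w for every string w. -/
import Mathlib


/-- The two-character parenthesis alphabet. -/
inductive Paren : Type
  | lparen
  | rparen
deriving DecidableEq

/-- The Dyck grammar of balanced parentheses. -/
inductive Dyck : List Paren → Type
  | nil : Dyck []
  | bal {w₁ w₂ : List Paren} :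
      Dyck w₁ → Dyck w₂ → Dyck (Paren.lparen :: w₁ ++ Paren.rparen :: w₂)

/-- Traces of a deterministic automaton. -/
inductive Trace {α S : Type} (δ : α → S → S) (isAcc : S → Bool) :
    S → Bool → List α → Type
  | nil (s : S) : Trace δ isAcc s (isAcc s) []
  | cons (a : α) {s : S} {b : Bool} {w : List α} :
      Trace δ isAcc (δ a s) b w → Trace δ isAcc s b (a :: w)

/-- Transition function of the counter automaton (`none` is the fail state). -/
def dyckδ : Paren → Option ℕ → Option ℕ
  | Paren.lparen, some n => some (n + 1)
  | Paren.rparen, some (n + 1) => some n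
  | Paren.rparen, some 0 => none
  | _, none => none

/-- Acceptance: exactly the state `some 0`. -/
def dyckAcc (s : Option ℕ) : Bool := decide (s = some 0)

-- auxiliary
def dyckRun (w : List Paren) (s : Option ℕ) : Option ℕ :=
  w.foldl (fun s a => dyckδ a s) s

theorem dyckRun_cons (a : Paren) (w : List Paren) (s : Option ℕ) :
    dyckRun (a :: w) s = dyckRun w (dyckδ a s) := rfl

theorem dyckRun_append (u v : List Paren) (s : Option ℕ) :
    dyckRun (u ++ v) s = dyckRun v (dyckRun u s) := List.foldl_append ..

theorem dyckδ_none (a : Paren) : dyckδ a none = none := by cases a <;> rfl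

theorem dyckRun_none (w : List Paren) : dyckRun w none = none := by
  induction w with
  | nil => rfl
  | cons a w ih => rw [dyckRun_cons, dyckδ_none, ih]

theorem dyck_run {w : List Paren} (d : Dyck w) : ∀ n, dyckRun w (some n) = some n := by
  induction d with
  | nil => intro n; rfl
  | @bal w₁ w₂ d₁ d₂ ih₁ ih₂ =>
    intro n
    show dyckRun (Paren.lparen :: (w₁ ++ Paren.rparen :: w₂)) (some n) = some n
    rw [dyckRun_cons]
    show dyckRun (w₁ ++ Paren.rparen :: w₂) (some (n+1)) = some n
    rw [dyckRun_append, ih₁, dyckRun_cons]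
    show dyckRun w₂ (some n) = some n
    exact ih₂ n

theorem dyck_append {v : List Paren} (dv : Dyck v) :
    ∀ {u : List Paren}, Dyck u → Nonempty (Dyck (u ++ v)) := by
  intro u du
  induction du with
  | nil => exact ⟨dv⟩
  | @bal w₁ w₂ d₁ d₂ ih₁ ih₂ =>
    obtain ⟨d⟩ := ih₂
    have h : Paren.lparen :: w₁ ++ Paren.rparen :: (w₂ ++ v)
        = (Paren.lparen :: w₁ ++ Paren.rparen :: w₂) ++ v := by simp
    exact ⟨h ▸ Dyck.bal d₁ d⟩

inductive NDyck : ℕ → List Paren → Prop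
  | base {w} : Nonempty (Dyck w) → NDyck 0 w
  | step {w₁ w₂ n} : Nonempty (Dyck w₁) → NDyck n w₂ →
      NDyck (n + 1) (w₁ ++ Paren.rparen :: w₂)

theorem run_to_ndyck : ∀ (w : List Paren) (n : ℕ),
    dyckRun w (some n) = some 0 → NDyck n w := by
  intro w
  induction w with
  | nil =>
    intro n h
    simp only [dyckRun, List.foldl_nil, Option.some.injEq] at h
    subst h
    exact NDyck.base ⟨Dyck.nil⟩
  | cons a t ih =>
    intro n h
    cases a with
    | lparen =>
      rw [dyckRun_cons] at h
      have ht := ih (n + 1) h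
      cases ht with
      | @step w₁ w₂ _ hd₁ h₂ =>
        cases h₂ with
        | base hd₂ =>
          obtain ⟨d₁⟩ := hd₁; obtain ⟨d₂⟩ := hd₂
          exact NDyck.base ⟨Dyck.bal d₁ d₂⟩
        | @step u v m hdu h' =>
          obtain ⟨d₁⟩ := hd₁; obtain ⟨du⟩ := hdu
          have heq : Paren.lparen :: (w₁ ++ Paren.rparen :: (u ++ Paren.rparen :: v))
              = (Paren.lparen :: w₁ ++ Paren.rparen :: u) ++ Paren.rparen :: v := by simp
          rw [heq]
          exact NDyck.step ⟨Dyck.bal d₁ du⟩ h'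
    | rparen =>
      rw [dyckRun_cons] at h
      cases n with
      | zero => rw [show dyckδ Paren.rparen (some 0) = none from rfl, dyckRun_none] at h; cases h
      | succ m =>
        have ht := ih m h
        exact NDyck.step ⟨Dyck.nil⟩ ht

theorem split_unique {w₁ w₂ v₁ v₂ : List Paren} (d : Dyck w₁) (e : Dyck v₁)
    (h : w₁ ++ Paren.rparen :: w₂ = v₁ ++ Paren.rparen :: v₂) : w₁ = v₁ ∧ w₂ = v₂ := by
  rcases List.append_eq_append_iff.mp h with ⟨u, hu1, hu2⟩ | ⟨u, hu1, hu2⟩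
  · cases u with
    | nil => simp at hu1 hu2; exact ⟨hu1.symm, hu2⟩
    | cons x u' =>
      injection hu2 with hx hw
      have := dyck_run e 0
      rw [hu1, ← hx, dyckRun_append, dyck_run d, dyckRun_cons,
        show dyckδ Paren.rparen (some 0) = none from rfl, dyckRun_none] at this
      cases this
  · cases u with
    | nil => simp at hu1 hu2; exact ⟨hu1, hu2.symm⟩
    | cons x u' =>
      injection hu2 with hx hw
      have := dyck_run d 0
      rw [hu1, ← hx, dyckRun_append, dyck_run e, dyckRun_cons,
        show dyckδ Paren.rparen (some 0) = none from rfl, dyckRun_none] at this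
      cases this

theorem dyck_unique : ∀ {w : List Paren} (d e : Dyck w), d = e := by
  intro w d
  induction d with
  | nil => intro e; cases e; rfl
  | @bal w₁ w₂ d₁ d₂ ih₁ ih₂ =>
    intro e
    have key : ∀ (u : List Paren) (e : Dyck u),
        u = Paren.lparen :: w₁ ++ Paren.rparen :: w₂ → HEq (Dyck.bal d₁ d₂) e := by
      intro u e
      cases e with
      | nil => intro h; cases h
      | @bal v₁ v₂ e₁ e₂ =>
        intro h
        injection h with _ h'
        obtain ⟨h1, h2⟩ := split_unique e₁ d₁ h'
        subst h1; subst h2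
        rw [ih₁ e₁, ih₂ e₂]
    exact (eq_of_heq (key _ e rfl))

theorem trace_unique {α S : Type} {δ : α → S → S} {isAcc : S → Bool} :
    ∀ {s b w} (t₁ t₂ : Trace δ isAcc s b w), t₁ = t₂ := by
  intro s b w t₁
  induction t₁ with
  | nil s => intro t₂; cases t₂; rfl
  | cons a t ih =>
    intro t₂
    cases t₂ with
    | cons _ t' => rw [ih t']

def mkTrace {α S : Type} (δ : α → S → S) (isAcc : S → Bool) :
    ∀ (w : List α) (s : S), Trace δ isAcc s (isAcc (w.foldl (fun s a => δ a s) s)) w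
  | [], s => Trace.nil s
  | a :: w, s => Trace.cons a (mkTrace δ isAcc w (δ a s))

theorem trace_b {α S : Type} {δ : α → S → S} {isAcc : S → Bool} {s b w}
    (t : Trace δ isAcc s b w) : b = isAcc (w.foldl (fun s a => δ a s) s) := by
  induction t with
  | nil => rfl
  | cons a t ih => exact ih


/-- The Dyck grammar is strongly equivalent to the accepting
traces of the counter automaton starting at counter `0`. -/
theorem dyck_equiv_counter_traces :
    ∀ w : List Paren,
      Nonempty (Dyck w ≃ Trace dyckδ dyckAcc (some 0) true w) := by
  intro w
  by_cases h : dyckRun w (some 0) = some 0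
  · haveI hs1 : Subsingleton (Dyck w) := ⟨dyck_unique⟩
    haveI hs2 : Subsingleton (Trace dyckδ dyckAcc (some 0) true w) := ⟨trace_unique⟩
    have hd : Nonempty (Dyck w) := by
      have := run_to_ndyck w 0 h
      cases this with
      | base hne => exact hne
    obtain ⟨d⟩ := hd
    have hb : dyckAcc (dyckRun w (some 0)) = true := by rw [h]; rfl
    have ht : Trace dyckδ dyckAcc (some 0) true w := hb ▸ mkTrace dyckδ dyckAcc w (some 0)
    exact ⟨equivOfSubsingletonOfSubsingleton (fun _ => ht) (fun _ => d)⟩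
  · have e1 : IsEmpty (Dyck w) := ⟨fun d => h (dyck_run d 0)⟩
    have e2 : IsEmpty (Trace dyckδ dyckAcc (some 0) true w) :=
      ⟨fun t => h (by
        have hb := trace_b t
        exact of_decide_eq_true hb.symm)⟩
    exact ⟨@Equiv.equivOfIsEmpty _ _ e1 e2⟩
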